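/- Let s : ℝ → ℝ^D be differentiable with s'(t) = Φ(t) - k • Γ(t) (sgn(s(t))), where ‖Φ(t)‖₂ ≤ δ, Γ(t) = w I + ΔΓ(t) with ‖ΔΓ(t)‖ ≤ ρ, and k > δ/(w - ρ√D) + ε for some ε > 0 and w > ρ√D. Then for V(t) = ½‖s(t)‖², V'(t) ≤ -ε(w - ρ√D) ‖s(t)‖ whenever s(t) ≠ 0. -/

import Mathlib

noncomputable def sgnVec {D : ℕ} (s : EuclideanSpace ℝ (Fin D)) : EuclideanSpace ℝ (Fin D) :=
  (EuclideanSpace.equiv (Fin D) ℝ).symm (fun i => Real.sign (s i))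

/-!
Along a trajectory, `V' = ⟪s, Φ⟫ - k w ⟪s, sgn s⟫ - k ⟪s, ΔΓ (sgn s)⟫`. Since `⟪s, sgn s⟫ = ‖s‖₁ ≥ ‖s‖`
and `‖sgn s‖ ≤ √D`, this is at most `(δ - k (w - ρ√D)) ‖s‖`, and the gain condition on `k` gives
`δ - k (w - ρ√D) ≤ -ε (w - ρ√D)`.
-/

open scoped RealInnerProductSpace

lemma Real.mul_sign_self (r : ℝ) : r * Real.sign r = |r| := by
  rcases lt_trichotomy r 0 with h | rfl | h
  · rw [Real.sign_of_neg h, abs_of_neg h, mul_neg_one]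
  · simp
  · rw [Real.sign_of_pos h, abs_of_pos h, mul_one]

lemma Real.abs_sign_le_one (r : ℝ) : |Real.sign r| ≤ 1 := by
  rcases Real.sign_apply_eq r with h | h | h <;> simp [h]

lemma EuclideanSpace.norm_le_sum_abs {ι : Type*} [Fintype ι] [DecidableEq ι]
    (v : EuclideanSpace ℝ ι) : ‖v‖ ≤ ∑ i, |v i| := by
  conv_lhs => rw [← (EuclideanSpace.basisFun ι ℝ).sum_repr v]
  refine (norm_sum_le _ _).trans (le_of_eq (Finset.sum_congr rfl fun i _ => ?_))
  simp [norm_smul]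

lemma sgnVec_apply {D : ℕ} (v : EuclideanSpace ℝ (Fin D)) (i : Fin D) :
    sgnVec v i = Real.sign (v i) := rfl

lemma inner_sgnVec_self {D : ℕ} (v : EuclideanSpace ℝ (Fin D)) :
    ⟪v, sgnVec v⟫ = ∑ i, |v i| := by
  simp only [PiLp.inner_apply, RCLike.inner_apply, conj_trivial, sgnVec_apply,
    Real.mul_sign_self, mul_comm (Real.sign _)]

lemma norm_le_inner_sgnVec {D : ℕ} (v : EuclideanSpace ℝ (Fin D)) : ‖v‖ ≤ ⟪v, sgnVec v⟫ :=
  inner_sgnVec_self v ▸ EuclideanSpace.norm_le_sum_abs v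

lemma norm_sgnVec_le {D : ℕ} (v : EuclideanSpace ℝ (Fin D)) : ‖sgnVec v‖ ≤ Real.sqrt D := by
  rw [EuclideanSpace.norm_eq]
  apply Real.sqrt_le_sqrt
  calc ∑ i, ‖sgnVec v i‖ ^ 2 ≤ ∑ _i : Fin D, (1 : ℝ) := Finset.sum_le_sum fun i _ => ?_
    _ = D := by simp
  rw [sgnVec_apply, Real.norm_eq_abs, sq_le_one_iff_abs_le_one, abs_abs]
  exact Real.abs_sign_le_one _

section InnerProductSpace

variable {E : Type*} [NormedAddCommGroup E] [InnerProductSpace ℝ E]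

lemma deriv_half_norm_sq {s : ℝ → E} {t : ℝ} (hs : DifferentiableAt ℝ s t) :
    deriv (fun τ => (1 / 2) * ‖s τ‖ ^ 2) t = ⟪s t, deriv s t⟫ := by
  rw [(hs.hasDerivAt.norm_sq.const_mul (1 / 2)).deriv]
  ring

lemma mul_norm_le_inner_perturbed_id {x σ : E} {Δ : E →L[ℝ] E} {w ρ c : ℝ} (hw : 0 ≤ w)
    (hΔ : ‖Δ‖ ≤ ρ) (hxσ : ‖x‖ ≤ ⟪x, σ⟫) (hσ : ‖σ‖ ≤ c) :
    (w - ρ * c) * ‖x‖ ≤ ⟪x, (w • ContinuousLinearMap.id ℝ E + Δ) σ⟫ := by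
  have hΔσ : |⟪x, Δ σ⟫| ≤ ρ * c * ‖x‖ :=
    calc |⟪x, Δ σ⟫| ≤ ‖x‖ * ‖Δ σ‖ := abs_real_inner_le_norm _ _
      _ ≤ ‖x‖ * (ρ * c) := by gcongr; exact Δ.le_of_opNorm_le_of_le hΔ hσ
      _ = ρ * c * ‖x‖ := mul_comm _ _
  have hwσ : w * ‖x‖ ≤ w * ⟪x, σ⟫ := mul_le_mul_of_nonneg_left hxσ hw
  simp only [add_apply, smul_apply,
    ContinuousLinearMap.id_apply, inner_add_right, real_inner_smul_right]
  linarith [neg_abs_le ⟪x, Δ σ⟫]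

lemma inner_sub_smul_perturbed_id_le {x φ σ : E} {Δ : E →L[ℝ] E} {k w ρ c δ : ℝ} (hk : 0 ≤ k)
    (hw : 0 ≤ w) (hφ : ‖φ‖ ≤ δ) (hΔ : ‖Δ‖ ≤ ρ) (hxσ : ‖x‖ ≤ ⟪x, σ⟫) (hσ : ‖σ‖ ≤ c) :
    ⟪x, φ - k • (w • ContinuousLinearMap.id ℝ E + Δ) σ⟫ ≤ δ * ‖x‖ - k * ((w - ρ * c) * ‖x‖) := by
  have hφx : ⟪x, φ⟫ ≤ δ * ‖x‖ :=
    (real_inner_le_norm _ _).trans (by rw [mul_comm]; gcongr)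
  rw [inner_sub_right, real_inner_smul_right]
  gcongr
  exact mul_norm_le_inner_perturbed_id hw hΔ hxσ hσ

end InnerProductSpace

theorem stmt_8_general {D : ℕ} (s Φ : ℝ → EuclideanSpace ℝ (Fin D))
    (Γ ΔΓ : ℝ → EuclideanSpace ℝ (Fin D) →L[ℝ] EuclideanSpace ℝ (Fin D))
    (k w ρ δ ε : ℝ) (hk : 0 < k) (hw0 : 0 < w)
    (hs : Differentiable ℝ s)
    (hΓ : ∀ t : ℝ, Γ t = w • ContinuousLinearMap.id ℝ (EuclideanSpace ℝ (Fin D)) + ΔΓ t)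
    (hode : ∀ t : ℝ, deriv s t = Φ t - k • (Γ t) (sgnVec (s t)))
    (hΦ : ∀ t : ℝ, ‖Φ t‖ ≤ δ)
    (hΔΓ : ∀ t : ℝ, ‖ΔΓ t‖ ≤ ρ)
    (hw : ρ * Real.sqrt D < w)
    (hgain : δ / (w - ρ * Real.sqrt D) + ε < k) :
    ∀ t : ℝ, s t ≠ 0 →
      deriv (fun τ => (1 / 2) * ‖s τ‖ ^ 2) t ≤ -(ε * (w - ρ * Real.sqrt D) * ‖s t‖) := by
  intro t _
  have hgap : 0 < w - ρ * Real.sqrt D := sub_pos.2 hw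
  have hmargin : δ < (k - ε) * (w - ρ * Real.sqrt D) :=
    (div_lt_iff₀ hgap).1 (lt_sub_iff_add_lt.2 hgain)
  rw [deriv_half_norm_sq (hs t), hode t, hΓ t]
  calc _ ≤ δ * ‖s t‖ - k * ((w - ρ * Real.sqrt D) * ‖s t‖) :=
        inner_sub_smul_perturbed_id_le hk.le hw0.le (hΦ t) (hΔΓ t) (norm_le_inner_sgnVec _)
          (norm_sgnVec_le _)
    _ ≤ -(ε * (w - ρ * Real.sqrt D) * ‖s t‖) := by nlinarith [norm_nonneg (s t)]

theorem stmt_8 {D : ℕ} (s Φ : ℝ → EuclideanSpace ℝ (Fin D))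
    (Γ ΔΓ : ℝ → EuclideanSpace ℝ (Fin D) →L[ℝ] EuclideanSpace ℝ (Fin D))
    (k w ρ δ ε : ℝ) (hk : 0 < k) (hw0 : 0 < w) (hρ : 0 ≤ ρ) (hδ : 0 ≤ δ) (hε : 0 < ε)
    (hs : Differentiable ℝ s)
    (hΓ : ∀ t : ℝ, Γ t = w • ContinuousLinearMap.id ℝ (EuclideanSpace ℝ (Fin D)) + ΔΓ t)
    (hode : ∀ t : ℝ, deriv s t = Φ t - k • (Γ t) (sgnVec (s t)))
    (hΦ : ∀ t : ℝ, ‖Φ t‖ ≤ δ)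
    (hΔΓ : ∀ t : ℝ, ‖ΔΓ t‖ ≤ ρ)
    (hw : ρ * Real.sqrt D < w)
    (hgain : δ / (w - ρ * Real.sqrt D) + ε < k) :
    ∀ t : ℝ, s t ≠ 0 →
      deriv (fun τ => (1 / 2) * ‖s τ‖ ^ 2) t ≤ -(ε * (w - ρ * Real.sqrt D) * ‖s t‖) :=
  stmt_8_general s Φ Γ ΔΓ k w ρ δ ε hk hw0 hs hΓ hode hΦ hΔΓ hw hgain
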